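/- Let A₁ ∈ ℝ^{m₁×n}, b₁ ∈ ℝ^{m₁}, A₂ ∈ ℝ^{m₂×n}, b₂ ∈ ℝ^{m₂}, and x̲ ≤ x̄ in ℝⁿ. Define P_i = {x ∈ ℝⁿ : x̲ ≤ x ≤ x̄, A_i x ≤ b_i} for i = 1,2 and assume both P₁ and P₂ are nonempty. Then the projection of the hull reformulation, namely H = {x ∈ ℝⁿ : ∃ λ ∈ [0,1], ∃ v₁, v₂ ∈ ℝⁿ, x = v₁ + v₂, A₁ v₁ ≤ λ b₁, A₂ v₂ ≤ (1−λ) b₂, λ x̲ ≤ v₁ ≤ λ x̄, (1−λ) x̲ ≤ v₂ ≤ (1−λ) x̄}, equals the convex hull of P₁ ∪ P₂. -/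
import Mathlib


/-- The projection of the hull (extended) reformulation of a two-term
disjunction over nonempty polyhedra `P₁`, `P₂` contained in a bounded box
equals the convex hull of `P₁ ∪ P₂`. -/
theorem hull_reformulation_eq_convexHull {n m₁ m₂ : ℕ}
    (A₁ : Matrix (Fin m₁) (Fin n) ℝ) (b₁ : Fin m₁ → ℝ)
    (A₂ : Matrix (Fin m₂) (Fin n) ℝ) (b₂ : Fin m₂ → ℝ)
    (xlo xhi : Fin n → ℝ) (hbox : xlo ≤ xhi)
    (hP₁ : ({x : Fin n → ℝ | xlo ≤ x ∧ x ≤ xhi ∧ A₁.mulVec x ≤ b₁}).Nonempty)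
    (hP₂ : ({x : Fin n → ℝ | xlo ≤ x ∧ x ≤ xhi ∧ A₂.mulVec x ≤ b₂}).Nonempty) :
    {x : Fin n → ℝ | ∃ l ∈ Set.Icc (0 : ℝ) 1, ∃ v₁ v₂ : Fin n → ℝ,
        x = v₁ + v₂ ∧
        A₁.mulVec v₁ ≤ l • b₁ ∧ A₂.mulVec v₂ ≤ (1 - l) • b₂ ∧
        l • xlo ≤ v₁ ∧ v₁ ≤ l • xhi ∧
        (1 - l) • xlo ≤ v₂ ∧ v₂ ≤ (1 - l) • xhi}
      = convexHull ℝ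
          ({x : Fin n → ℝ | xlo ≤ x ∧ x ≤ xhi ∧ A₁.mulVec x ≤ b₁} ∪
           {x : Fin n → ℝ | xlo ≤ x ∧ x ≤ xhi ∧ A₂.mulVec x ≤ b₂}) := by
  set S₁ := {x : Fin n → ℝ | xlo ≤ x ∧ x ≤ xhi ∧ A₁.mulVec x ≤ b₁} with hS₁
  set S₂ := {x : Fin n → ℝ | xlo ≤ x ∧ x ≤ xhi ∧ A₂.mulVec x ≤ b₂} with hS₂
  apply Set.Subset.antisymm
  · -- H ⊆ convexHull
    rintro x ⟨l, ⟨hl0, hl1⟩, v₁, v₂, hx, h1, h2, hlo1, hhi1, hlo2, hhi2⟩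
    rcases eq_or_lt_of_le hl0 with h0 | h0
    · -- l = 0 : v₁ = 0, x = v₂ ∈ S₂
      have hv₁ : v₁ = 0 := by
        funext i
        have ha := hlo1 i
        have hb := hhi1 i
        simp only [Pi.zero_apply]
        simp [← h0] at ha hb
        linarith
      apply subset_convexHull ℝ (S₁ ∪ S₂)
      right
      have : x = v₂ := by simp [hx, hv₁]
      subst this
      refine ⟨?_, ?_, ?_⟩
      · intro i; have := hlo2 i; simp [← h0] at this; simpa using this
      · intro i; have := hhi2 i; simp [← h0] at this; simpa using this
      · intro i; have := h2 i; simp [← h0] at this; simpa using this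
    rcases eq_or_lt_of_le hl1 with h1' | h1'
    · -- l = 1 : v₂ = 0, x = v₁ ∈ S₁
      have hv₂ : v₂ = 0 := by
        funext i
        have ha := hlo2 i
        have hb := hhi2 i
        simp only [Pi.zero_apply]
        simp [h1'] at ha hb
        linarith
      apply subset_convexHull ℝ (S₁ ∪ S₂)
      left
      have : x = v₁ := by simp [hx, hv₂]
      subst this
      refine ⟨?_, ?_, ?_⟩
      · intro i; have := hlo1 i; simpa [h1'] using this
      · intro i; have := hhi1 i; simpa [h1'] using this
      · intro i; have := h1 i; simpa [h1'] using this
    · -- 0 < l < 1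
      have hl : (0:ℝ) < l := h0
      have hl' : (0:ℝ) < 1 - l := by linarith
      have hy₁ : l⁻¹ • v₁ ∈ S₁ := by
        refine ⟨?_, ?_, ?_⟩
        · intro i
          have := hlo1 i
          simp only [Pi.smul_apply, smul_eq_mul] at this ⊢
          rw [le_inv_mul_iff₀ hl]
          simpa using this
        · intro i
          have := hhi1 i
          simp only [Pi.smul_apply, smul_eq_mul] at this ⊢
          rw [inv_mul_le_iff₀ hl]
          simpa [mul_comm] using this
        · intro i
          have := h1 i
          rw [Matrix.mulVec_smul]
          simp only [Pi.smul_apply, smul_eq_mul] at this ⊢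
          rw [inv_mul_le_iff₀ hl]
          simpa [mul_comm] using this
      have hy₂ : (1 - l)⁻¹ • v₂ ∈ S₂ := by
        refine ⟨?_, ?_, ?_⟩
        · intro i
          have := hlo2 i
          simp only [Pi.smul_apply, smul_eq_mul] at this ⊢
          rw [le_inv_mul_iff₀ hl']
          simpa using this
        · intro i
          have := hhi2 i
          simp only [Pi.smul_apply, smul_eq_mul] at this ⊢
          rw [inv_mul_le_iff₀ hl']
          simpa [mul_comm] using this
        · intro i
          have := h2 i
          rw [Matrix.mulVec_smul]
          simp only [Pi.smul_apply, smul_eq_mul] at this ⊢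
          rw [inv_mul_le_iff₀ hl']
          simpa [mul_comm] using this
      have hxeq : x = l • (l⁻¹ • v₁) + (1 - l) • ((1 - l)⁻¹ • v₂) := by
        rw [smul_smul, smul_smul, mul_inv_cancel₀ hl.ne', mul_inv_cancel₀ hl'.ne',
          one_smul, one_smul, hx]
      rw [hxeq]
      exact (convex_convexHull ℝ (S₁ ∪ S₂))
        (subset_convexHull ℝ _ (Or.inl hy₁))
        (subset_convexHull ℝ _ (Or.inr hy₂))
        (le_of_lt hl) (le_of_lt hl') (by ring)
  · -- convexHull ⊆ H
    apply convexHull_min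
    · rintro x (⟨ha, hb, hc⟩ | ⟨ha, hb, hc⟩)
      · exact ⟨1, ⟨zero_le_one, le_refl 1⟩, x, 0,
          by simp, by simpa using hc, by simp [Matrix.mulVec_zero],
          by simpa using ha, by simpa using hb, by simp, by simp⟩
      · exact ⟨0, ⟨le_refl 0, zero_le_one⟩, 0, x,
          by simp, by simp [Matrix.mulVec_zero], by simpa using hc,
          by simp, by simp, by simpa using ha, by simpa using hb⟩
    · -- convexity of H
      rintro x ⟨l, ⟨hl0, hl1⟩, v₁, v₂, hx, hA1, hA2, hlo1, hhi1, hlo2, hhi2⟩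
        y ⟨l', ⟨hl0', hl1'⟩, w₁, w₂, hy, hA1', hA2', hlo1', hhi1', hlo2', hhi2'⟩
        a c ha hc hac
      refine ⟨a * l + c * l', ⟨by positivity, by nlinarith⟩,
        a • v₁ + c • w₁, a • v₂ + c • w₂, ?_, ?_, ?_, ?_, ?_, ?_, ?_⟩
      · rw [hx, hy]; module
      · intro i
        have e1 := hA1 i; have e2 := hA1' i
        simp only [Matrix.mulVec_add, Matrix.mulVec_smul, Pi.add_apply,
          Pi.smul_apply, smul_eq_mul] at e1 e2 ⊢
        have hrw : 1 - (a * l + c * l') = a * (1 - l) + c * (1 - l') := by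
          linarith
        try rw [hrw]
        nlinarith [mul_le_mul_of_nonneg_left e1 ha, mul_le_mul_of_nonneg_left e2 hc]
      · intro i
        have e1 := hA2 i; have e2 := hA2' i
        simp only [Matrix.mulVec_add, Matrix.mulVec_smul, Pi.add_apply,
          Pi.smul_apply, smul_eq_mul] at e1 e2 ⊢
        have hrw : 1 - (a * l + c * l') = a * (1 - l) + c * (1 - l') := by
          linarith
        try rw [hrw]
        nlinarith [mul_le_mul_of_nonneg_left e1 ha, mul_le_mul_of_nonneg_left e2 hc]
      · intro i
        have e1 := hlo1 i; have e2 := hlo1' i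
        simp only [Pi.add_apply, Pi.smul_apply, smul_eq_mul] at e1 e2 ⊢
        have hrw : 1 - (a * l + c * l') = a * (1 - l) + c * (1 - l') := by
          linarith
        try rw [hrw]
        nlinarith [mul_le_mul_of_nonneg_left e1 ha, mul_le_mul_of_nonneg_left e2 hc]
      · intro i
        have e1 := hhi1 i; have e2 := hhi1' i
        simp only [Pi.add_apply, Pi.smul_apply, smul_eq_mul] at e1 e2 ⊢
        have hrw : 1 - (a * l + c * l') = a * (1 - l) + c * (1 - l') := by
          linarith
        try rw [hrw]
        nlinarith [mul_le_mul_of_nonneg_left e1 ha, mul_le_mul_of_nonneg_left e2 hc]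
      · intro i
        have e1 := hlo2 i; have e2 := hlo2' i
        simp only [Pi.add_apply, Pi.smul_apply, smul_eq_mul] at e1 e2 ⊢
        have hrw : 1 - (a * l + c * l') = a * (1 - l) + c * (1 - l') := by
          linarith
        try rw [hrw]
        nlinarith [mul_le_mul_of_nonneg_left e1 ha, mul_le_mul_of_nonneg_left e2 hc]
      · intro i
        have e1 := hhi2 i; have e2 := hhi2' i
        simp only [Pi.add_apply, Pi.smul_apply, smul_eq_mul] at e1 e2 ⊢
        have hrw : 1 - (a * l + c * l') = a * (1 - l) + c * (1 - l') := by
          linarith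
        try rw [hrw]
        nlinarith [mul_le_mul_of_nonneg_left e1 ha, mul_le_mul_of_nonneg_left e2 hc]
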